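/- arXiv:1508.00161 — 2 statements merged into one kernel-verified Lean document; each statement's English description precedes it below -/
import Mathlib

section
/- Consider a sandpile on Z^3 whose initial configuration has at least 5 chips on every vertex (x,y,z) with at least two coordinates equal to zero, at least 4 chips on every vertex with exactly one coordinate equal to zero, and at least 3 chips on every vertex. If the origin topples at least once in a legal complete toppling sequence, then every vertex of Z^3 topples at least once. -/
/-- Topple at vertex `x`: remove `d(x) = (succ x).card` chips from `x` and add one chip
to each out-neighbour of `x`. Topplings at stable vertices are allowed. -/
def toppleStep {V : Type*} [DecidableEq V] (succ : V → Finset V) (c : V → ℤ) (x : V) :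
    V → ℤ :=
  fun v => c v - (if v = x then ((succ x).card : ℤ) else 0) + (if v ∈ succ x then 1 else 0)

/-- The configuration after performing the first `n` steps of the (possibly infinite)
toppling sequence `a`; `a n = none` means no toppling at step `n`. -/
def confAt {V : Type*} [DecidableEq V] (succ : V → Finset V) (c0 : V → ℤ)
    (a : ℕ → Option V) : ℕ → V → ℤ
  | 0 => c0
  | n + 1 =>
    match a n with
    | none => confAt succ c0 a n
    | some x => toppleStep succ (confAt succ c0 a n) x

/-- A vertex is unstable in configuration `c` if it has at least `d(x)` chips. -/
def Unstable {V : Type*} (succ : V → Finset V) (c : V → ℤ) (x : V) : Prop :=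
  ((succ x).card : ℤ) ≤ c x

/-- A toppling sequence is legal if every toppled vertex is unstable when toppled. -/
def LegalSeq {V : Type*} [DecidableEq V] (succ : V → Finset V) (c0 : V → ℤ)
    (a : ℕ → Option V) : Prop :=
  ∀ n x, a n = some x → Unstable succ (confAt succ c0 a n) x

/-- A toppling sequence is complete if any vertex that is unstable at some time is
toppled at least once afterward. -/
def CompleteSeq {V : Type*} [DecidableEq V] (succ : V → Finset V) (c0 : V → ℤ)
    (a : ℕ → Option V) : Prop :=
  ∀ n x, Unstable succ (confAt succ c0 a n) x → ∃ m, n ≤ m ∧ a m = some x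

/-- The number of occurrences (possibly `⊤`) of vertex `x` in the sequence `a`. -/
noncomputable def occCount {V : Type*} (a : ℕ → Option V) (x : V) : ℕ∞ :=
  {n | a n = some x}.encard

/-- The six nearest neighbours of a vertex of `ℤ³`. -/
def Z3nbrs (v : ℤ × ℤ × ℤ) : Finset (ℤ × ℤ × ℤ) :=
  {(v.1 + 1, v.2.1, v.2.2), (v.1 - 1, v.2.1, v.2.2),
   (v.1, v.2.1 + 1, v.2.2), (v.1, v.2.1 - 1, v.2.2),
   (v.1, v.2.1, v.2.2 + 1), (v.1, v.2.1, v.2.2 - 1)}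

/-- The number of coordinates of `v ∈ ℤ³` that are equal to zero. -/
def zeroCoords (v : ℤ × ℤ × ℤ) : ℕ :=
  (if v.1 = 0 then 1 else 0) + (if v.2.1 = 0 then 1 else 0) + (if v.2.2 = 0 then 1 else 0)

/- ### Auxiliary lemmas -/

lemma card_Z3nbrs (v : ℤ × ℤ × ℤ) : (Z3nbrs v).card = 6 := by
  obtain ⟨x, y, z⟩ := v
  simp only [Z3nbrs]
  rw [Finset.card_insert_of_notMem, Finset.card_insert_of_notMem,
    Finset.card_insert_of_notMem, Finset.card_insert_of_notMem,
    Finset.card_insert_of_notMem, Finset.card_singleton] <;>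
  · simp only [Finset.mem_insert, Finset.mem_singleton, Prod.mk.injEq, not_or]
    omega

lemma mem_Z3nbrs_symm {v w : ℤ × ℤ × ℤ} (h : w ∈ Z3nbrs v) : v ∈ Z3nbrs w := by
  obtain ⟨x, y, z⟩ := v
  obtain ⟨x', y', z'⟩ := w
  simp only [Z3nbrs, Finset.mem_insert, Finset.mem_singleton, Prod.mk.injEq] at h ⊢
  rcases h with ⟨h1, h2, h3⟩ | ⟨h1, h2, h3⟩ | ⟨h1, h2, h3⟩ | ⟨h1, h2, h3⟩ |
    ⟨h1, h2, h3⟩ | ⟨h1, h2, h3⟩ <;> subst h1 <;> subst h2 <;> subst h3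
  · exact Or.inr (Or.inl ⟨by ring, rfl, rfl⟩)
  · exact Or.inl ⟨by ring, rfl, rfl⟩
  · exact Or.inr (Or.inr (Or.inr (Or.inl ⟨rfl, by ring, rfl⟩)))
  · exact Or.inr (Or.inr (Or.inl ⟨rfl, by ring, rfl⟩))
  · exact Or.inr (Or.inr (Or.inr (Or.inr (Or.inr ⟨rfl, rfl, by ring⟩))))
  · exact Or.inr (Or.inr (Or.inr (Or.inr (Or.inl ⟨rfl, rfl, by ring⟩))))

open Classical in
/-- Number of steps before time `n` at which a neighbour of `v` topples. -/
noncomputable def nbrCount (a : ℕ → Option (ℤ × ℤ × ℤ)) (v : ℤ × ℤ × ℤ) (n : ℕ) : ℕ :=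
  ((Finset.range n).filter (fun m => ∃ w, a m = some w ∧ v ∈ Z3nbrs w)).card

open Classical in
lemma conf_eq (c0 : ℤ × ℤ × ℤ → ℤ) (a : ℕ → Option (ℤ × ℤ × ℤ)) (v : ℤ × ℤ × ℤ)
    (n : ℕ) (h : ∀ m < n, a m ≠ some v) :
    confAt Z3nbrs c0 a n v = c0 v + nbrCount a v n := by
  induction n with
  | zero => simp [confAt, nbrCount]
  | succ n ih =>
    have hlt : ∀ m < n, a m ≠ some v := fun m hm => h m (by omega)
    have hR : nbrCount a v (n+1) =
        nbrCount a v n + (if ∃ w, a n = some w ∧ v ∈ Z3nbrs w then 1 else 0) := by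
      unfold nbrCount
      rw [Finset.range_add_one, Finset.filter_insert]
      by_cases hc : ∃ w, a n = some w ∧ v ∈ Z3nbrs w
      · rw [if_pos hc, if_pos hc, Finset.card_insert_of_notMem (by simp)]
      · rw [if_neg hc, if_neg hc, add_zero]
    cases hx : a n with
    | none =>
      simp only [confAt, hx]
      rw [ih hlt, hR]
      simp [hx]
    | some x =>
      have hvx : v ≠ x := by
        intro he; exact h n (by omega) (he ▸ hx)
      simp only [confAt, hx, toppleStep]
      rw [ih hlt, hR, if_neg hvx]
      by_cases hm : v ∈ Z3nbrs x
      · rw [if_pos hm, if_pos ⟨x, hx, hm⟩]; push_cast; ring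
      · rw [if_neg hm, if_neg (by rintro ⟨w, hw, hw2⟩; rw [hx] at hw; cases hw; exact hm hw2)]
        push_cast; ring

open Classical in
/-- If enough neighbours of `v` topple, then `v` topples. -/
lemma topples_of_nbrs (c0 : ℤ × ℤ × ℤ → ℤ) (a : ℕ → Option (ℤ × ℤ × ℤ))
    (hcom : CompleteSeq Z3nbrs c0 a) (v : ℤ × ℤ × ℤ) (S : Finset (ℤ × ℤ × ℤ))
    (hS : ∀ w ∈ S, w ∈ Z3nbrs v) (ht : ∀ w ∈ S, ∃ n, a n = some w)
    (hc : 6 ≤ c0 v + S.card) : ∃ n, a n = some v := by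
  by_contra hno
  push_neg at hno
  choose t ht' using ht
  set f : {w // w ∈ S} → ℕ := fun w => t w.1 w.2 with hf
  have hinj : Function.Injective f := by
    intro w1 w2 he
    apply Subtype.ext
    apply Option.some_injective
    rw [← ht' w1.1 w1.2, ← ht' w2.1 w2.2]
    show a (f w1) = a (f w2)
    rw [he]
  set N : ℕ := (S.attach.sup f) + 1 with hN
  have hcard : S.card ≤ nbrCount a v N := by
    unfold nbrCount
    have hsub : S.attach.image f ⊆
        (Finset.range N).filter (fun m => ∃ w, a m = some w ∧ v ∈ Z3nbrs w) := by
      intro m hm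
      simp only [Finset.mem_image] at hm
      obtain ⟨w, hw, rfl⟩ := hm
      refine Finset.mem_filter.mpr ⟨Finset.mem_range.mpr ?_, w.1, ht' w.1 w.2,
        mem_Z3nbrs_symm (hS w.1 w.2)⟩
      have := Finset.le_sup (f := f) hw
      omega
    calc S.card = (S.attach.image f).card := by
          rw [Finset.card_image_of_injective _ hinj, Finset.card_attach]
      _ ≤ _ := Finset.card_le_card hsub
  have hun : Unstable Z3nbrs (confAt Z3nbrs c0 a N) v := by
    unfold Unstable
    rw [card_Z3nbrs, conf_eq c0 a v N (fun m _ => hno m)]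
    omega
  obtain ⟨m, _, hm⟩ := hcom N v hun
  exact hno m hm

lemma sign_cases {x : ℤ} (hx : x ≠ 0) : x.sign = 1 ∧ 0 < x ∨ x.sign = -1 ∧ x < 0 := by
  rcases lt_or_gt_of_ne hx with h | h
  · exact Or.inr ⟨Int.sign_eq_neg_one_of_neg h, h⟩
  · exact Or.inl ⟨Int.sign_eq_one_of_pos h, h⟩

lemma abs_dec {x : ℤ} (hx : x ≠ 0) : (x - x.sign).natAbs + 1 = x.natAbs := by
  rcases sign_cases hx with ⟨h, h'⟩ | ⟨h, h'⟩ <;> rw [h] <;> omega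

lemma sub_sign_ne {x : ℤ} (hx : x ≠ 0) : x - x.sign ≠ x := by
  rcases sign_cases hx with ⟨h, _⟩ | ⟨h, _⟩ <;> rw [h] <;> omega

lemma nbr1 (x y z : ℤ) (hx : x ≠ 0) :
    ((x - x.sign, y, z) : ℤ × ℤ × ℤ) ∈ Z3nbrs (x, y, z) := by
  rcases sign_cases hx with ⟨h, _⟩ | ⟨h, _⟩
  · have e : x - x.sign = x - 1 := by rw [h]
    rw [e]
    exact Finset.mem_insert_of_mem (Finset.mem_insert_self _ _)
  · have e : x - x.sign = x + 1 := by rw [h]; ring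
    rw [e]
    exact Finset.mem_insert_self _ _

lemma nbr2 (x y z : ℤ) (hy : y ≠ 0) :
    ((x, y - y.sign, z) : ℤ × ℤ × ℤ) ∈ Z3nbrs (x, y, z) := by
  rcases sign_cases hy with ⟨h, _⟩ | ⟨h, _⟩
  · have e : y - y.sign = y - 1 := by rw [h]
    rw [e]
    exact Finset.mem_insert_of_mem (Finset.mem_insert_of_mem
      (Finset.mem_insert_of_mem (Finset.mem_insert_self _ _)))
  · have e : y - y.sign = y + 1 := by rw [h]; ring
    rw [e]
    exact Finset.mem_insert_of_mem (Finset.mem_insert_of_mem (Finset.mem_insert_self _ _))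

lemma nbr3 (x y z : ℤ) (hz : z ≠ 0) :
    ((x, y, z - z.sign) : ℤ × ℤ × ℤ) ∈ Z3nbrs (x, y, z) := by
  rcases sign_cases hz with ⟨h, _⟩ | ⟨h, _⟩
  · have e : z - z.sign = z - 1 := by rw [h]
    rw [e]
    exact Finset.mem_insert_of_mem (Finset.mem_insert_of_mem (Finset.mem_insert_of_mem
      (Finset.mem_insert_of_mem (Finset.mem_insert_of_mem (Finset.mem_singleton_self _)))))
  · have e : z - z.sign = z + 1 := by rw [h]; ring
    rw [e]
    exact Finset.mem_insert_of_mem (Finset.mem_insert_of_mem (Finset.mem_insert_of_mem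
      (Finset.mem_insert_of_mem (Finset.mem_insert_self _ _))))

/-- The bomb lemma: with at least 5 chips on vertices with two or more zero coordinates,
at least 4 on vertices with exactly one zero coordinate, and at least 3 everywhere, if the
origin ever topples in a legal complete toppling sequence then every vertex topples. -/
theorem bomb (c0 : ℤ × ℤ × ℤ → ℤ)
    (h2 : ∀ v, 2 ≤ zeroCoords v → 5 ≤ c0 v)
    (h1 : ∀ v, zeroCoords v = 1 → 4 ≤ c0 v)
    (h0 : ∀ v, 3 ≤ c0 v)
    (a : ℕ → Option (ℤ × ℤ × ℤ))
    (hleg : LegalSeq Z3nbrs c0 a) (hcom : CompleteSeq Z3nbrs c0 a)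
    (horig : ∃ n, a n = some ((0, 0, 0) : ℤ × ℤ × ℤ)) :
    ∀ v, ∃ n, a n = some v := by
  suffices H : ∀ N (v : ℤ × ℤ × ℤ), v.1.natAbs + v.2.1.natAbs + v.2.2.natAbs = N →
      ∃ n, a n = some v by
    intro v; exact H _ v rfl
  intro N
  induction N using Nat.strong_induction_on with
  | _ N IH =>
    rintro ⟨x, y, z⟩ hv
    simp only at hv
    by_cases hx : x = 0 <;> by_cases hy : y = 0 <;> by_cases hz : z = 0
    · subst hx; subst hy; subst hz; exact horig
    · -- x = 0, y = 0, z ≠ 0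
      subst hx; subst hy
      have key := IH ((0:ℤ).natAbs + (0:ℤ).natAbs + (z - z.sign).natAbs)
        (by have := abs_dec hz; simp only [Int.natAbs_zero] at hv ⊢; omega)
        (0, 0, z - z.sign) rfl
      refine topples_of_nbrs c0 a hcom (0, 0, z) {(0, 0, z - z.sign)} ?_ ?_ ?_
      · intro w hw; simp only [Finset.mem_singleton] at hw; subst hw; exact nbr3 0 0 z hz
      · intro w hw; simp only [Finset.mem_singleton] at hw; subst hw; exact key
      · rw [Finset.card_singleton]
        have := h2 (0, 0, z) (by simp [zeroCoords, hz]); omega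
    · -- x = 0, y ≠ 0, z = 0
      subst hx; subst hz
      have key := IH ((0:ℤ).natAbs + (y - y.sign).natAbs + (0:ℤ).natAbs)
        (by have := abs_dec hy; simp only [Int.natAbs_zero] at hv ⊢; omega)
        (0, y - y.sign, 0) rfl
      refine topples_of_nbrs c0 a hcom (0, y, 0) {(0, y - y.sign, 0)} ?_ ?_ ?_
      · intro w hw; simp only [Finset.mem_singleton] at hw; subst hw; exact nbr2 0 y 0 hy
      · intro w hw; simp only [Finset.mem_singleton] at hw; subst hw; exact key
      · rw [Finset.card_singleton]
        have := h2 (0, y, 0) (by simp [zeroCoords, hy]); omega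
    · -- x = 0, y ≠ 0, z ≠ 0
      subst hx
      have key1 := IH ((0:ℤ).natAbs + (y - y.sign).natAbs + z.natAbs)
        (by have := abs_dec hy; simp only [Int.natAbs_zero] at hv ⊢; omega)
        (0, y - y.sign, z) rfl
      have key2 := IH ((0:ℤ).natAbs + y.natAbs + (z - z.sign).natAbs)
        (by have := abs_dec hz; simp only [Int.natAbs_zero] at hv ⊢; omega)
        (0, y, z - z.sign) rfl
      refine topples_of_nbrs c0 a hcom (0, y, z)
        {(0, y - y.sign, z), (0, y, z - z.sign)} ?_ ?_ ?_
      · intro w hw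
        simp only [Finset.mem_insert, Finset.mem_singleton] at hw
        rcases hw with rfl | rfl
        · exact nbr2 0 y z hy
        · exact nbr3 0 y z hz
      · intro w hw
        simp only [Finset.mem_insert, Finset.mem_singleton] at hw
        rcases hw with rfl | rfl
        · exact key1
        · exact key2
      · rw [Finset.card_insert_of_notMem (by
          simp only [Finset.mem_singleton, Prod.mk.injEq]
          rintro ⟨-, h1, -⟩
          exact sub_sign_ne hy h1), Finset.card_singleton]
        have := h1 (0, y, z) (by simp [zeroCoords, hy, hz]); omega
    · -- x ≠ 0, y = 0, z = 0
      subst hy; subst hz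
      have key := IH ((x - x.sign).natAbs + (0:ℤ).natAbs + (0:ℤ).natAbs)
        (by have := abs_dec hx; simp only [Int.natAbs_zero] at hv ⊢; omega)
        (x - x.sign, 0, 0) rfl
      refine topples_of_nbrs c0 a hcom (x, 0, 0) {(x - x.sign, 0, 0)} ?_ ?_ ?_
      · intro w hw; simp only [Finset.mem_singleton] at hw; subst hw; exact nbr1 x 0 0 hx
      · intro w hw; simp only [Finset.mem_singleton] at hw; subst hw; exact key
      · rw [Finset.card_singleton]
        have := h2 (x, 0, 0) (by simp [zeroCoords, hx]); omega
    · -- x ≠ 0, y = 0, z ≠ 0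
      subst hy
      have key1 := IH ((x - x.sign).natAbs + (0:ℤ).natAbs + z.natAbs)
        (by have := abs_dec hx; simp only [Int.natAbs_zero] at hv ⊢; omega)
        (x - x.sign, 0, z) rfl
      have key2 := IH (x.natAbs + (0:ℤ).natAbs + (z - z.sign).natAbs)
        (by have := abs_dec hz; simp only [Int.natAbs_zero] at hv ⊢; omega)
        (x, 0, z - z.sign) rfl
      refine topples_of_nbrs c0 a hcom (x, 0, z)
        {(x - x.sign, 0, z), (x, 0, z - z.sign)} ?_ ?_ ?_
      · intro w hw
        simp only [Finset.mem_insert, Finset.mem_singleton] at hw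
        rcases hw with rfl | rfl
        · exact nbr1 x 0 z hx
        · exact nbr3 x 0 z hz
      · intro w hw
        simp only [Finset.mem_insert, Finset.mem_singleton] at hw
        rcases hw with rfl | rfl
        · exact key1
        · exact key2
      · rw [Finset.card_insert_of_notMem (by
          simp only [Finset.mem_singleton, Prod.mk.injEq]
          rintro ⟨h1, -⟩
          exact sub_sign_ne hx h1), Finset.card_singleton]
        have := h1 (x, 0, z) (by simp [zeroCoords, hx, hz]); omega
    · -- x ≠ 0, y ≠ 0, z = 0
      subst hz
      have key1 := IH ((x - x.sign).natAbs + y.natAbs + (0:ℤ).natAbs)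
        (by have := abs_dec hx; simp only [Int.natAbs_zero] at hv ⊢; omega)
        (x - x.sign, y, 0) rfl
      have key2 := IH (x.natAbs + (y - y.sign).natAbs + (0:ℤ).natAbs)
        (by have := abs_dec hy; simp only [Int.natAbs_zero] at hv ⊢; omega)
        (x, y - y.sign, 0) rfl
      refine topples_of_nbrs c0 a hcom (x, y, 0)
        {(x - x.sign, y, 0), (x, y - y.sign, 0)} ?_ ?_ ?_
      · intro w hw
        simp only [Finset.mem_insert, Finset.mem_singleton] at hw
        rcases hw with rfl | rfl
        · exact nbr1 x y 0 hx
        · exact nbr2 x y 0 hy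
      · intro w hw
        simp only [Finset.mem_insert, Finset.mem_singleton] at hw
        rcases hw with rfl | rfl
        · exact key1
        · exact key2
      · rw [Finset.card_insert_of_notMem (by
          simp only [Finset.mem_singleton, Prod.mk.injEq]
          rintro ⟨h1, -⟩
          exact sub_sign_ne hx h1), Finset.card_singleton]
        have := h1 (x, y, 0) (by simp [zeroCoords, hx, hy]); omega
    · -- x ≠ 0, y ≠ 0, z ≠ 0
      have key1 := IH ((x - x.sign).natAbs + y.natAbs + z.natAbs)
        (by have := abs_dec hx; omega)
        (x - x.sign, y, z) rfl
      have key2 := IH (x.natAbs + (y - y.sign).natAbs + z.natAbs)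
        (by have := abs_dec hy; omega)
        (x, y - y.sign, z) rfl
      have key3 := IH (x.natAbs + y.natAbs + (z - z.sign).natAbs)
        (by have := abs_dec hz; omega)
        (x, y, z - z.sign) rfl
      refine topples_of_nbrs c0 a hcom (x, y, z)
        {(x - x.sign, y, z), (x, y - y.sign, z), (x, y, z - z.sign)} ?_ ?_ ?_
      · intro w hw
        simp only [Finset.mem_insert, Finset.mem_singleton] at hw
        rcases hw with rfl | rfl | rfl
        · exact nbr1 x y z hx
        · exact nbr2 x y z hy
        · exact nbr3 x y z hz
      · intro w hw
        simp only [Finset.mem_insert, Finset.mem_singleton] at hw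
        rcases hw with rfl | rfl | rfl
        · exact key1
        · exact key2
        · exact key3
      · rw [Finset.card_insert_of_notMem (by
          simp only [Finset.mem_insert, Finset.mem_singleton, Prod.mk.injEq, not_or]
          constructor
          · rintro ⟨h1, -⟩; exact sub_sign_ne hx h1
          · rintro ⟨h1, -⟩; exact sub_sign_ne hx h1),
          Finset.card_insert_of_notMem (by
            simp only [Finset.mem_singleton, Prod.mk.injEq]
            rintro ⟨-, h1, -⟩
            exact sub_sign_ne hy h1), Finset.card_singleton]
        have := h0 (x, y, z); omega
end

section
/- On a finite or countable locally finite graph, for any initial chip configuration there exists a function N : V → ℕ ∪ {∞} such that every legal complete toppling sequence topples exactly N(x) times at each vertex x. -/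
section Aux
variable {V : Type*} [DecidableEq V]

/-- Number of topplings of `x` among the first `n` steps. -/
def cntTop (a : ℕ → Option V) (x : V) (n : ℕ) : ℕ :=
  ((Finset.range n).filter (fun k => a k = some x)).card

/-- Number of chips received by `v` among the first `n` steps. -/
def inflow (succ : V → Finset V) (a : ℕ → Option V) (v : V) (n : ℕ) : ℕ :=
  ((Finset.range n).filter (fun k => v ∈ (a k).elim ∅ succ)).card

lemma cntTop_succ (a : ℕ → Option V) (x : V) (n : ℕ) :
    cntTop a x (n + 1) = cntTop a x n + (if a n = some x then 1 else 0) := by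
  unfold cntTop
  rw [Finset.range_add_one, Finset.filter_insert]
  split <;> simp [Finset.card_insert_of_notMem]

lemma inflow_succ (succ : V → Finset V) (a : ℕ → Option V) (v : V) (n : ℕ) :
    inflow succ a v (n + 1) = inflow succ a v n + (if v ∈ (a n).elim ∅ succ then 1 else 0) := by
  unfold inflow
  rw [Finset.range_add_one, Finset.filter_insert]
  split <;> simp [Finset.card_insert_of_notMem]

lemma cntTop_mono (a : ℕ → Option V) (x : V) {n m : ℕ} (h : n ≤ m) :
    cntTop a x n ≤ cntTop a x m :=
  Finset.card_le_card (Finset.filter_subset_filter _ (by simpa using Finset.range_subset_range.2 h))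

lemma confAt_eq (succ : V → Finset V) (c0 : V → ℤ) (a : ℕ → Option V) (n : ℕ) (v : V) :
    confAt succ c0 a n v =
      c0 v - ((succ v).card : ℤ) * cntTop a v n + inflow succ a v n := by
  induction n with
  | zero => simp [confAt, cntTop, inflow]
  | succ n ih =>
    rw [cntTop_succ, inflow_succ]
    show (match a n with
      | none => confAt succ c0 a n
      | some x => toppleStep succ (confAt succ c0 a n) x) v = _
    cases h : a n with
    | none => simp [ih]
    | some x =>
      simp only [toppleStep, ih, Option.elim]
      by_cases hvx : v = x
      · subst hvx
        simp only [if_pos rfl]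
        by_cases hm : v ∈ succ v <;> simp [hm] <;> ring
      · have : ¬ (some x = some v) := by simpa using fun e => hvx e.symm
        simp only [if_neg hvx, if_neg this]
        by_cases hm : v ∈ succ x <;> simp [hm] <;> ring

lemma cntTop_le_occ (a : ℕ → Option V) (x : V) (n : ℕ) :
    (cntTop a x n : ℕ∞) ≤ occCount a x := by
  unfold occCount cntTop
  rw [← Set.encard_coe_eq_coe_finsetCard]
  apply Set.encard_mono
  intro k hk
  simp only [Finset.coe_filter, Set.mem_setOf_eq] at hk ⊢
  exact hk.2

lemma exists_cnt_ge (a : ℕ → Option V) (x : V) (k : ℕ) (h : (k : ℕ∞) ≤ occCount a x) :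
    ∃ M, k ≤ cntTop a x M := by
  obtain ⟨t, hts, htk⟩ := Set.exists_subset_encard_eq h
  have hfin : t.Finite := Set.finite_of_encard_eq_coe htk
  have hcard : hfin.toFinset.card = k := by
    have := hfin.encard_eq_coe_toFinset_card
    rw [htk] at this
    exact_mod_cast this.symm
  refine ⟨hfin.toFinset.sup id + 1, ?_⟩
  rw [← hcard]
  unfold cntTop
  apply Finset.card_le_card
  intro m hm
  have hmt : m ∈ t := hfin.mem_toFinset.1 hm
  simp only [Finset.mem_filter, Finset.mem_range]
  exact ⟨Nat.lt_succ_of_le (Finset.le_sup (f := id) hm), hts hmt⟩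

lemma occ_le_of_cnt_le (a : ℕ → Option V) (x : V) (c : ℕ∞)
    (h : ∀ n, (cntTop a x n : ℕ∞) ≤ c) : occCount a x ≤ c := by
  by_contra hc
  push_neg at hc
  lift c to ℕ using hc.ne_top with c'
  obtain ⟨M, hM⟩ := exists_cnt_ge a x (c' + 1) (by exact_mod_cast Order.add_one_le_of_lt hc)
  have := h M
  have hle : cntTop a x M ≤ c' := by exact_mod_cast this
  omega

lemma inflow_le (succ : V → Finset V) (a b : ℕ → Option V) (v : V) (n m : ℕ)
    (h : ∀ y, cntTop a y n ≤ cntTop b y m) :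
    inflow succ a v n ≤ inflow succ b v m := by
  classical
  set T : Finset V :=
    ((Finset.range n).image a).eraseNone.filter (fun y => v ∈ succ y) with hT
  have hdisj : ∀ (c : ℕ → Option V) (K : ℕ), ∀ y ∈ T, ∀ z ∈ T, y ≠ z →
      Disjoint ((Finset.range K).filter (fun k => c k = some y))
        ((Finset.range K).filter (fun k => c k = some z)) := by
    intro c K y _ z _ hyz
    rw [Finset.disjoint_left]
    intro k hk hk'
    simp only [Finset.mem_filter] at hk hk'
    exact hyz (by rw [hk.2] at hk'; exact Option.some.inj hk'.2)
  have h1 : inflow succ a v n = ∑ y ∈ T, cntTop a y n := by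
    unfold inflow cntTop
    rw [← Finset.card_biUnion (hdisj a n)]
    congr 1
    ext k
    simp only [Finset.mem_filter, Finset.mem_range, Finset.mem_biUnion, hT,
      Finset.mem_eraseNone, Finset.mem_image]
    constructor
    · rintro ⟨hk, hv⟩
      cases hak : a k with
      | none => rw [hak] at hv; simp [Option.elim] at hv
      | some y =>
        rw [hak] at hv
        exact ⟨y, ⟨⟨k, hk, hak⟩, hv⟩, hk, rfl⟩
    · rintro ⟨y, ⟨_, hvy⟩, hk, hak⟩
      exact ⟨hk, by rw [hak]; exact hvy⟩
  have h2 : ∑ y ∈ T, cntTop b y m ≤ inflow succ b v m := by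
    unfold inflow cntTop
    rw [← Finset.card_biUnion (hdisj b m)]
    apply Finset.card_le_card
    intro k hk
    simp only [Finset.mem_biUnion, Finset.mem_filter, Finset.mem_range, hT,
      Finset.mem_eraseNone] at hk ⊢
    obtain ⟨y, ⟨_, hvy⟩, hk, hbk⟩ := hk
    exact ⟨hk, by rw [hbk]; exact hvy⟩
  calc inflow succ a v n = ∑ y ∈ T, cntTop a y n := h1
    _ ≤ ∑ y ∈ T, cntTop b y m := Finset.sum_le_sum (fun y _ => h y)
    _ ≤ inflow succ b v m := h2

lemma cnt_zero_of_not_mem (a : ℕ → Option V) (n : ℕ) (y : V)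
    (h : y ∉ ((Finset.range n).image a).eraseNone) : cntTop a y n = 0 := by
  unfold cntTop
  rw [Finset.card_eq_zero, Finset.filter_eq_empty_iff]
  intro k hk hak
  exact h (Finset.mem_eraseNone.2 (Finset.mem_image.2 ⟨k, hk, hak⟩))

/-- Key lemma: prefix counts of a legal sequence are bounded by total counts of any
legal complete sequence. -/
lemma cnt_le_occ_of (succ : V → Finset V) (c0 : V → ℤ) (a b : ℕ → Option V)
    (ha : LegalSeq succ c0 a) (hb : LegalSeq succ c0 b) (hbc : CompleteSeq succ c0 b) :
    ∀ n x, (cntTop a x n : ℕ∞) ≤ occCount b x := by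
  intro n
  induction n with
  | zero => intro x; simp [cntTop]
  | succ n ih =>
    intro x
    by_cases hax : a n = some x
    swap
    · rw [cntTop_succ, if_neg hax, Nat.add_zero]; exact ih x
    rw [cntTop_succ, if_pos hax]
    set j := cntTop a x n with hj
    rcases lt_or_ge (j : ℕ∞) (occCount b x) with hlt | hle
    · exact_mod_cast Order.add_one_le_of_lt hlt
    exfalso
    have heq : occCount b x = (j : ℕ∞) := le_antisymm hle (ih x)
    -- choose a time M in b by which every vertex has toppled at least as much as in a's prefix
    classical
    set S : Finset V := ((Finset.range n).image a).eraseNone ∪ {x} with hS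
    have hchoice : ∀ y : V, ∃ M, cntTop a y n ≤ cntTop b y M := fun y =>
      exists_cnt_ge b y (cntTop a y n) ((ih y))
    choose f hf using hchoice
    set M : ℕ := S.sup f with hM
    have hall : ∀ y, cntTop a y n ≤ cntTop b y M := by
      intro y
      by_cases hy : y ∈ S
      · exact le_trans (hf y) (cntTop_mono b y (Finset.le_sup hy))
      · have : y ∉ ((Finset.range n).image a).eraseNone := fun hc => hy (Finset.mem_union_left _ hc)
        rw [cnt_zero_of_not_mem a n y this]; exact Nat.zero_le _
    have hbxM : cntTop b x M = j := by
      have h1 : j ≤ cntTop b x M := hall x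
      have h2 : (cntTop b x M : ℕ∞) ≤ (j : ℕ∞) := heq ▸ cntTop_le_occ b x M
      exact le_antisymm (by exact_mod_cast h2) h1
    -- x is unstable in b at time M
    have hunst_a : Unstable succ (confAt succ c0 a n) x := ha n x hax
    have hunst_b : Unstable succ (confAt succ c0 b M) x := by
      unfold Unstable at hunst_a ⊢
      rw [confAt_eq] at hunst_a ⊢
      rw [hbxM]
      rw [← hj] at hunst_a
      have hinf : (inflow succ a x n : ℤ) ≤ inflow succ b x M := by
        exact_mod_cast inflow_le succ a b x n M hall
      linarith
    obtain ⟨m, hMm, hbm⟩ := hbc M x hunst_b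
    have : j + 1 ≤ cntTop b x (m + 1) := by
      rw [cntTop_succ, if_pos hbm]
      have := cntTop_mono b x hMm
      omega
    have h2 : (cntTop b x (m+1) : ℕ∞) ≤ (j : ℕ∞) := heq ▸ cntTop_le_occ b x (m+1)
    have : cntTop b x (m+1) ≤ j := by exact_mod_cast h2
    omega

lemma occ_eq_occ (succ : V → Finset V) (c0 : V → ℤ) (a b : ℕ → Option V)
    (ha : LegalSeq succ c0 a) (hac : CompleteSeq succ c0 a)
    (hb : LegalSeq succ c0 b) (hbc : CompleteSeq succ c0 b) (x : V) :
    occCount a x = occCount b x :=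
  le_antisymm
    (occ_le_of_cnt_le a x _ (fun n => cnt_le_occ_of succ c0 a b ha hb hbc n x))
    (occ_le_of_cnt_le b x _ (fun n => cnt_le_occ_of succ c0 b a hb ha hac n x))

end Aux

/-- On a finite or countable locally finite graph, for any initial configuration there is
a function `N : V → ℕ∞` such that every legal complete toppling sequence topples exactly
`N x` times at each vertex `x`. -/
theorem exists_toppling_function {V : Type*} [Countable V] [DecidableEq V]
    (succ : V → Finset V) (c0 : V → ℤ) :
    ∃ N : V → ℕ∞, ∀ a : ℕ → Option V,
      LegalSeq succ c0 a → CompleteSeq succ c0 a → ∀ x, occCount a x = N x := by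
  classical
  by_cases hex : ∃ a : ℕ → Option V, LegalSeq succ c0 a ∧ CompleteSeq succ c0 a
  · obtain ⟨a0, ha0, ha0c⟩ := hex
    exact ⟨fun x => occCount a0 x, fun a ha hac x =>
      occ_eq_occ succ c0 a a0 ha hac ha0 ha0c x⟩
  · exact ⟨fun _ => 0, fun a ha hac x => absurd ⟨a, ha, hac⟩ hex⟩
end
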